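/- arXiv:2105.13348 — 3 statements merged into one kernel-verified Lean document; each statement's English description precedes it below -/
import Mathlib

section
/- Regret bound for dual averaging with constant step size: for every z ∈ X, Σ_{t=1}^T ⟨G_t, y_t − z⟩ ≤ ‖z − x₁‖²/(2η) + (η/2)·Σ_{t=1}^T ‖G_t‖². -/
open scoped RealInnerProductSpace

/-- Regret bound for dual averaging with constant step size: with iterates
`y t = proj (x₁ - η • ∑_{s=1}^{t-1} G s)`, for every `z ∈ X`,
`∑_{t=1}^T ⟪G t, y t − z⟫ ≤ ‖z − x₁‖²/(2η) + (η/2)·∑_{t=1}^T ‖G t‖²`. -/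
theorem dual_averaging_regret
    {E : Type*} [NormedAddCommGroup E] [InnerProductSpace ℝ E] [CompleteSpace E]
    (X : Set E) (hXne : X.Nonempty) (hXcl : IsClosed X) (hXconv : Convex ℝ X)
    (proj : E → E)
    (hproj : ∀ v : E, proj v ∈ X ∧ ∀ w ∈ X, ‖v - proj v‖ ≤ ‖v - w‖)
    (x₁ : E) (η : ℝ) (hη : 0 < η)
    (T : ℕ) (G : ℕ → E) (y : ℕ → E)
    (hy : ∀ t ∈ Finset.Icc 1 T, y t = proj (x₁ - η • ∑ s ∈ Finset.Icc 1 (t - 1), G s))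
    (z : E) (hz : z ∈ X) :
    ∑ t ∈ Finset.Icc 1 T, ⟪G t, y t - z⟫
      ≤ ‖z - x₁‖ ^ 2 / (2 * η) + (η / 2) * ∑ t ∈ Finset.Icc 1 T, ‖G t‖ ^ 2 := by
  classical
  have h2η : (0:ℝ) < 2 * η := by linarith
  have hmem : ∀ v : E, proj v ∈ X := fun v => (hproj v).1
  -- projection characterization
  have hchar : ∀ v : E, ∀ w ∈ X, ⟪v - proj v, w - proj v⟫ ≤ 0 := by
    intro v w hw
    haveI : Nonempty X := hXne.to_subtype
    have heq : ‖v - proj v‖ = ⨅ w : X, ‖v - w‖ := by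
      refine le_antisymm (le_ciInf fun u => (hproj v).2 u u.2) ?_
      exact ciInf_le ⟨0, by rintro r ⟨u, rfl⟩; positivity⟩ (⟨proj v, hmem v⟩ : X)
    exact (norm_eq_iInf_iff_real_inner_le_zero hXconv (hmem v)).mp heq w hw
  have hpyth : ∀ v : E, ∀ w ∈ X, ‖proj v - v‖^2 + ‖w - proj v‖^2 ≤ ‖w - v‖^2 := by
    intro v w hw
    have h := hchar v w hw
    have hexp : ‖w - v‖^2 = ‖w - proj v‖^2 - 2 * ⟪w - proj v, v - proj v⟫ + ‖v - proj v‖^2 := by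
      have h2 : w - v = (w - proj v) - (v - proj v) := by abel
      rw [h2, norm_sub_sq_real]
    have h' : ⟪w - proj v, v - proj v⟫ ≤ 0 := by
      rw [real_inner_comm (v - proj v) (w - proj v)]; exact h
    have hrev2 : ‖proj v - v‖^2 = ‖v - proj v‖^2 := by rw [norm_sub_rev]
    linarith [h', hexp, hrev2]
  set yy : ℕ → E := fun t => proj (x₁ - η • ∑ s ∈ Finset.Icc 1 (t - 1), G s) with hyy
  have hyyX : ∀ t, yy t ∈ X := fun t => hmem _
  -- expansion of squared distance
  have hexpand : ∀ (n : ℕ) (u : E),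
      ‖u - (x₁ - η • ∑ s ∈ Finset.Icc 1 n, G s)‖^2
        = ‖u - x₁‖^2 + 2*η*(⟪∑ s ∈ Finset.Icc 1 n, G s, u⟫ - ⟪∑ s ∈ Finset.Icc 1 n, G s, x₁⟫)
          + η^2*‖∑ s ∈ Finset.Icc 1 n, G s‖^2 := by
    intro n u
    have h2 : u - (x₁ - η • ∑ s ∈ Finset.Icc 1 n, G s)
        = (u - x₁) + η • ∑ s ∈ Finset.Icc 1 n, G s := by abel
    rw [h2, norm_add_sq_real, real_inner_smul_right, norm_smul, Real.norm_eq_abs,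
      abs_of_pos hη, real_inner_comm (∑ s ∈ Finset.Icc 1 n, G s) (u - x₁),
      inner_sub_right]
    ring
  -- minimality with strong convexity
  have hmin : ∀ (n : ℕ) (w : E), w ∈ X →
      2*η*⟪∑ s ∈ Finset.Icc 1 n, G s, yy (n+1)⟫ + ‖yy (n+1) - x₁‖^2 + ‖w - yy (n+1)‖^2
        ≤ 2*η*⟪∑ s ∈ Finset.Icc 1 n, G s, w⟫ + ‖w - x₁‖^2 := by
    intro n w hw
    have hyn : yy (n+1) = proj (x₁ - η • ∑ s ∈ Finset.Icc 1 n, G s) := by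
      simp [hyy]
    have hp := hpyth (x₁ - η • ∑ s ∈ Finset.Icc 1 n, G s) w hw
    rw [← hyn] at hp
    have e1 := hexpand n w
    have e2 := hexpand n (yy (n+1))
    nlinarith [hp, e1, e2]
  -- telescoping
  have htel : ∀ n : ℕ,
      (∑ t ∈ Finset.Icc 1 n, (2*η*⟪G t, yy (t+1)⟫ + ‖yy (t+1) - yy t‖^2)) + ‖yy 1 - x₁‖^2
        ≤ 2*η*⟪∑ s ∈ Finset.Icc 1 n, G s, yy (n+1)⟫ + ‖yy (n+1) - x₁‖^2 := by
    intro n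
    induction n with
    | zero => simp
    | succ n ih =>
      rw [Finset.sum_Icc_succ_top (Nat.one_le_iff_ne_zero.mpr (Nat.succ_ne_zero n)),
        Finset.sum_Icc_succ_top (Nat.one_le_iff_ne_zero.mpr (Nat.succ_ne_zero n)),
        inner_add_left]
      have hstep := hmin n (yy (n+1+1)) (hyyX _)
      linarith
  -- pointwise bound
  have habound : ∀ t, 2*η*⟪G t, yy t - yy (t+1)⟫ - ‖yy (t+1) - yy t‖^2 ≤ η^2 * ‖G t‖^2 := by
    intro t
    have h0 : (0:ℝ) ≤ ‖η • G t - (yy t - yy (t+1))‖^2 := by positivity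
    have hx : ‖η • G t - (yy t - yy (t+1))‖^2
        = η^2*‖G t‖^2 - 2*η*⟪G t, yy t - yy (t+1)⟫ + ‖yy t - yy (t+1)‖^2 := by
      rw [norm_sub_sq_real, real_inner_smul_left, norm_smul, Real.norm_eq_abs,
        abs_of_pos hη]
      ring
    have hrev : ‖yy (t+1) - yy t‖^2 = ‖yy t - yy (t+1)‖^2 := by rw [norm_sub_rev]
    linarith [h0, hx, hrev]
  -- replace y by yy
  have hyz : ∀ t ∈ Finset.Icc 1 T, ⟪G t, y t - z⟫ = ⟪G t, yy t - z⟫ := by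
    intro t ht
    rw [hy t ht]
  rw [Finset.sum_congr rfl hyz]
  -- split the sum
  have hsplit : 2*η*(∑ t ∈ Finset.Icc 1 T, ⟪G t, yy t - z⟫)
      = (∑ t ∈ Finset.Icc 1 T, (2*η*⟪G t, yy t - yy (t+1)⟫ - ‖yy (t+1) - yy t‖^2))
        + (∑ t ∈ Finset.Icc 1 T, (2*η*⟪G t, yy (t+1)⟫ + ‖yy (t+1) - yy t‖^2))
        - 2*η*⟪∑ t ∈ Finset.Icc 1 T, G t, z⟫ := by
    rw [sum_inner, Finset.mul_sum, Finset.mul_sum, ← Finset.sum_add_distrib,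
      ← Finset.sum_sub_distrib]
    apply Finset.sum_congr rfl
    intro t _
    rw [inner_sub_right (G t) (yy t) z, inner_sub_right (G t) (yy t) (yy (t+1))]
    ring
  have hts : (∑ t ∈ Finset.Icc 1 T, (2*η*⟪G t, yy t - yy (t+1)⟫ - ‖yy (t+1) - yy t‖^2))
      ≤ ∑ t ∈ Finset.Icc 1 T, η^2 * ‖G t‖^2 :=
    Finset.sum_le_sum (fun t _ => habound t)
  have hminz := hmin T z hz
  have htelT := htel T
  have hnn1 : (0:ℝ) ≤ ‖yy 1 - x₁‖^2 := by positivity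
  have hnn2 : (0:ℝ) ≤ ‖z - yy (T+1)‖^2 := by positivity
  have hmain : 2*η*(∑ t ∈ Finset.Icc 1 T, ⟪G t, yy t - z⟫)
      ≤ ‖z - x₁‖^2 + η^2 * ∑ t ∈ Finset.Icc 1 T, ‖G t‖^2 := by
    rw [hsplit, Finset.mul_sum]
    linarith [hts, hminz, htelT, hnn1, hnn2]
  rw [← sub_nonneg]
  have hfin : ‖z - x₁‖ ^ 2 / (2 * η) + η / 2 * ∑ t ∈ Finset.Icc 1 T, ‖G t‖ ^ 2
      - ∑ t ∈ Finset.Icc 1 T, ⟪G t, yy t - z⟫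
      = ((‖z - x₁‖^2 + η^2 * ∑ t ∈ Finset.Icc 1 T, ‖G t‖^2)
          - 2*η*(∑ t ∈ Finset.Icc 1 T, ⟪G t, yy t - z⟫)) / (2*η) := by
    field_simp
  rw [hfin]
  apply div_nonneg _ (le_of_lt h2η)
  linarith
end

section
/- Disagreement bound between local and virtual iterates: let y^t = proj_X(x₁ − η·Σ_{s=1}^{t−1} Σ_{j∈A_s} g_j^s) be the virtual iterate at time t. Suppose every subgradient satisfies ‖g_j^s‖ ≤ L, that S_i^t ⊆ {(j,s) : 1 ≤ s < t, j ∈ A_s}, and that the bounded-delay condition holds: (j,s) ∈ S_i^t whenever t > s + τ and j ∈ A_s. Then for every i ∈ A_t, ‖x_i^t − y^t‖ ≤ η·L·Σ_{s=max(1, t−τ)}^{t−1} n_s, where x_i^t = proj_X(x₁ − η·Σ_{(j,s)∈S_i^t} g_j^s). -/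
open scoped RealInnerProductSpace

lemma proj_var_ineq {E : Type*} [NormedAddCommGroup E] [InnerProductSpace ℝ E] [CompleteSpace E]
    {X : Set E} (hXconv : Convex ℝ X) {proj : E → E}
    (hproj : ∀ v : E, proj v ∈ X ∧ ∀ w ∈ X, ‖v - proj v‖ ≤ ‖v - w‖)
    (u : E) : ∀ w ∈ X, ⟪u - proj u, w - proj u⟫ ≤ 0 := by
  have : Nonempty X := ⟨⟨proj u, (hproj u).1⟩⟩
  have hinf : ‖u - proj u‖ = ⨅ w : X, ‖u - w‖ := by
    apply le_antisymm
    · exact le_ciInf fun w => (hproj u).2 w w.2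
    · exact ciInf_le ⟨0, fun x ⟨w, hw⟩ => hw ▸ norm_nonneg _⟩ (⟨proj u, (hproj u).1⟩ : X)
  exact (norm_eq_iInf_iff_real_inner_le_zero hXconv (hproj u).1).mp hinf

lemma proj_nonexp {E : Type*} [NormedAddCommGroup E] [InnerProductSpace ℝ E] [CompleteSpace E]
    {X : Set E} (hXconv : Convex ℝ X) {proj : E → E}
    (hproj : ∀ v : E, proj v ∈ X ∧ ∀ w ∈ X, ‖v - proj v‖ ≤ ‖v - w‖)
    (u₁ u₂ : E) : ‖proj u₁ - proj u₂‖ ≤ ‖u₁ - u₂‖ := by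
  set v₁ := proj u₁
  set v₂ := proj u₂
  have h1 : ⟪u₁ - v₁, v₂ - v₁⟫ ≤ 0 := proj_var_ineq hXconv hproj u₁ v₂ (hproj u₂).1
  have h2 : ⟪u₂ - v₂, v₁ - v₂⟫ ≤ 0 := proj_var_ineq hXconv hproj u₂ v₁ (hproj u₁).1
  have key : ‖v₁ - v₂‖ ^ 2 ≤ ⟪u₁ - u₂, v₁ - v₂⟫ := by
    have := real_inner_self_eq_norm_sq (v₁ - v₂)
    have expand : ⟪u₁ - u₂, v₁ - v₂⟫ - ⟪v₁ - v₂, v₁ - v₂⟫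
        = -⟪u₁ - v₁, v₂ - v₁⟫ - ⟪u₂ - v₂, v₁ - v₂⟫ := by
      simp only [inner_sub_left, inner_sub_right, real_inner_comm]
      ring
    nlinarith
  have hcs : ⟪u₁ - u₂, v₁ - v₂⟫ ≤ ‖u₁ - u₂‖ * ‖v₁ - v₂‖ := real_inner_le_norm _ _
  nlinarith [norm_nonneg (v₁ - v₂), norm_nonneg (u₁ - u₂)]

/-- Disagreement bound between the local iterate `x_i^t` and the virtual iterate
`y^t = proj(x₁ − η·∑_{s=1}^{t−1} ∑_{j∈A_s} g_j^s)`: under bounded subgradients and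
the bounded-delay condition, `‖x_i^t − y^t‖ ≤ η·L·∑_{s=max(1,t−τ)}^{t−1} n_s`. -/
theorem daeron_disagreement_bound
    {E : Type*} [NormedAddCommGroup E] [InnerProductSpace ℝ E] [CompleteSpace E]
    {I : Type*} [DecidableEq I]
    -- the constraint set and its metric projection
    (X : Set E) (hXne : X.Nonempty) (hXcl : IsClosed X) (hXconv : Convex ℝ X)
    (proj : E → E)
    (hproj : ∀ v : E, proj v ∈ X ∧ ∀ w ∈ X, ‖v - proj v‖ ≤ ‖v - w‖)
    -- the active agents and the subgradients
    (A : ℕ → Finset I) (g : ℕ → I → E) (L : ℝ)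
    (hgL : ∀ s : ℕ, ∀ j ∈ A s, ‖g s j‖ ≤ L)
    -- the time, the agent, its index set and the delay bound
    (t : ℕ) (ht : 1 ≤ t) (i : I) (hi : i ∈ A t)
    (S : Finset (I × ℕ))
    (hS : ∀ p ∈ S, 1 ≤ p.2 ∧ p.2 < t ∧ p.1 ∈ A p.2)
    (τ : ℕ)
    (hdelay : ∀ s : ℕ, 1 ≤ s → s + τ < t → ∀ j ∈ A s, (j, s) ∈ S)
    -- the iterates
    (η : ℝ) (hη : 0 < η) (x₁ : E) (xit yt : E)
    (hxit : xit = proj (x₁ - η • ∑ p ∈ S, g p.2 p.1))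
    (hyt : yt = proj (x₁ - η • ∑ s ∈ Finset.Icc 1 (t - 1), ∑ j ∈ A s, g s j)) :
    ‖xit - yt‖ ≤ η * L * ∑ s ∈ Finset.Icc (max 1 (t - τ)) (t - 1), ((A s).card : ℝ) := by
  classical
  -- the full pair set and the "recent" pair set
  set T : Finset (I × ℕ) :=
    (Finset.Icc 1 (t - 1)).biUnion (fun s => (A s).image (fun j => (j, s))) with hT
  set T' : Finset (I × ℕ) :=
    (Finset.Icc (max 1 (t - τ)) (t - 1)).biUnion (fun s => (A s).image (fun j => (j, s)))
    with hT'
  have hmemT : ∀ p : I × ℕ, p ∈ T ↔ p.2 ∈ Finset.Icc 1 (t - 1) ∧ p.1 ∈ A p.2 := by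
    intro p
    simp only [hT, Finset.mem_biUnion, Finset.mem_image]
    constructor
    · rintro ⟨s, hs, j, hj, rfl⟩; exact ⟨hs, hj⟩
    · rintro ⟨hs, hj⟩; exact ⟨p.2, hs, p.1, hj, rfl⟩
  have hmemT' : ∀ p : I × ℕ, p ∈ T' ↔ p.2 ∈ Finset.Icc (max 1 (t - τ)) (t - 1) ∧ p.1 ∈ A p.2 := by
    intro p
    simp only [hT', Finset.mem_biUnion, Finset.mem_image]
    constructor
    · rintro ⟨s, hs, j, hj, rfl⟩; exact ⟨hs, hj⟩
    · rintro ⟨hs, hj⟩; exact ⟨p.2, hs, p.1, hj, rfl⟩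
  -- rewrite the double sum as a sum over T
  have hsumT : ∑ s ∈ Finset.Icc 1 (t - 1), ∑ j ∈ A s, g s j = ∑ p ∈ T, g p.2 p.1 := by
    rw [hT, Finset.sum_biUnion]
    · refine Finset.sum_congr rfl fun s _ => ?_
      rw [Finset.sum_image]
      intro a _ b _ hab
      exact (Prod.mk.injEq ..).mp hab |>.1
    · intro a _ b _ hab
      refine Finset.disjoint_left.mpr fun p hpa hpb => hab ?_
      simp only [Finset.mem_image] at hpa hpb
      obtain ⟨j, _, rfl⟩ := hpa
      obtain ⟨j', _, h⟩ := hpb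
      exact ((Prod.mk.injEq ..).mp h).2.symm
  have hSsub : S ⊆ T := fun p hp => (hmemT p).mpr
    ⟨Finset.mem_Icc.mpr ⟨(hS p hp).1, Nat.le_sub_one_of_lt (hS p hp).2.1⟩, (hS p hp).2.2⟩
  have hDsub : T \ S ⊆ T' := by
    intro p hp
    obtain ⟨hpT, hpS⟩ := Finset.mem_sdiff.mp hp
    obtain ⟨hps, hpA⟩ := (hmemT p).mp hpT
    obtain ⟨h1, h2⟩ := Finset.mem_Icc.mp hps
    have hnotlt : ¬ p.2 + τ < t := fun hlt => hpS (by simpa using hdelay p.2 h1 hlt p.1 hpA)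
    have : t - τ ≤ p.2 := Nat.sub_le_iff_le_add.mpr (not_lt.mp hnotlt)
    exact (hmemT' p).mpr ⟨Finset.mem_Icc.mpr ⟨max_le h1 this, h2⟩, hpA⟩
  -- L is nonnegative
  have hL0 : 0 ≤ L := le_trans (norm_nonneg _) (hgL t i hi)
  -- bound the norm of the sum over the missing pairs
  have hbound : ‖∑ p ∈ T \ S, g p.2 p.1‖ ≤ L * ∑ s ∈ Finset.Icc (max 1 (t - τ)) (t - 1), ((A s).card : ℝ) := by
    calc ‖∑ p ∈ T \ S, g p.2 p.1‖ ≤ ∑ p ∈ T \ S, ‖g p.2 p.1‖ := norm_sum_le _ _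
    _ ≤ ∑ p ∈ T', ‖g p.2 p.1‖ :=
        Finset.sum_le_sum_of_subset_of_nonneg hDsub (fun _ _ _ => norm_nonneg _)
    _ ≤ ∑ p ∈ T', L := Finset.sum_le_sum fun p hp => hgL p.2 p.1 ((hmemT' p).mp hp).2
    _ = (T'.card : ℝ) * L := by simp [mul_comm]
    _ = L * ∑ s ∈ Finset.Icc (max 1 (t - τ)) (t - 1), ((A s).card : ℝ) := by
        rw [mul_comm]
        congr 1
        rw [hT', Finset.card_biUnion]
        · push_cast
          refine Finset.sum_congr rfl fun s _ => ?_
          rw [Finset.card_image_of_injective _ (fun a b hab => ((Prod.mk.injEq ..).mp hab).1)]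
        · intro a _ b _ hab
          refine Finset.disjoint_left.mpr fun p hpa hpb => hab ?_
          simp only [Finset.mem_image] at hpa hpb
          obtain ⟨j, _, rfl⟩ := hpa
          obtain ⟨j', _, h⟩ := hpb
          exact ((Prod.mk.injEq ..).mp h).2.symm
  -- conclude via nonexpansiveness of the projection
  calc ‖xit - yt‖
      ≤ ‖(x₁ - η • ∑ p ∈ S, g p.2 p.1)
          - (x₁ - η • ∑ s ∈ Finset.Icc 1 (t - 1), ∑ j ∈ A s, g s j)‖ := by
        rw [hxit, hyt]; exact proj_nonexp hXconv hproj _ _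
    _ = ‖η • ∑ p ∈ T \ S, g p.2 p.1‖ := by
        rw [hsumT, ← Finset.sum_sdiff hSsub]
        congr 1
        rw [smul_add]
        abel
    _ = η * ‖∑ p ∈ T \ S, g p.2 p.1‖ := by
        rw [norm_smul, Real.norm_eq_abs, abs_of_pos hη]
    _ ≤ η * (L * ∑ s ∈ Finset.Icc (max 1 (t - τ)) (t - 1), ((A s).card : ℝ)) :=
        mul_le_mul_of_nonneg_left hbound hη.le
    _ = η * L * ∑ s ∈ Finset.Icc (max 1 (t - τ)) (t - 1), ((A s).card : ℝ) := by ring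
end

section
/- Batched dual-averaging regret bound with bounded gradients: for every z ∈ X, Σ_{t=1}^T Σ_{i∈A_t} ⟨g_i^t, y_t − z⟩ ≤ ‖z − x₁‖²/(2η) + (η/2)·Σ_{t=1}^T n_t²·L², where y_t = proj_X(x₁ − η·Σ_{s=1}^{t−1} Σ_{j∈A_s} g_j^s) and every ‖g_i^t‖ ≤ L. -/
open scoped RealInnerProductSpace

lemma step_ineq {E : Type*} [NormedAddCommGroup E] [InnerProductSpace ℝ E]
    (η : ℝ) (u h p q z : E) (hVI : ⟪u - p, q - p⟫ ≤ 0) :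
    2*η*⟪h, p - z⟫ ≤ (‖u - z‖^2 - ‖u - p‖^2) - (‖u - η•h - z‖^2 - ‖u - η•h - q‖^2)
      + η^2*‖h‖^2 := by
  have hid : 2*η*⟪h, p - z⟫ - ((‖u - z‖^2 - ‖u - p‖^2) - (‖u - η•h - z‖^2 - ‖u - η•h - q‖^2)
      + η^2*‖h‖^2) = -‖(u - p) - (u - η•h - q)‖^2 + 2*⟪u - p, q - p⟫ := by
    simp only [← real_inner_self_eq_norm_sq, inner_sub_left, inner_sub_right,
      real_inner_smul_left, real_inner_smul_right,
      real_inner_comm h u, real_inner_comm p u, real_inner_comm q u, real_inner_comm z u,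
      real_inner_comm p h, real_inner_comm q h, real_inner_comm z h,
      real_inner_comm q p, real_inner_comm z p, real_inner_comm z q]
    ring
  nlinarith [sq_nonneg ‖(u - p) - (u - η•h - q)‖]

lemma proj_VI {E : Type*} [NormedAddCommGroup E] [InnerProductSpace ℝ E]
    {X : Set E} (hXconv : Convex ℝ X) {proj : E → E}
    (hproj : ∀ v : E, proj v ∈ X ∧ ∀ w ∈ X, ‖v - proj v‖ ≤ ‖v - w‖)
    (v : E) {w : E} (hw : w ∈ X) : ⟪v - proj v, w - proj v⟫ ≤ 0 := by
  have hmem := (hproj v).1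
  have : Nonempty X := ⟨⟨proj v, hmem⟩⟩
  have hinf : ‖v - proj v‖ = ⨅ w : X, ‖v - (w : E)‖ := by
    refine le_antisymm (le_ciInf fun w => (hproj v).2 w w.2) ?_
    exact ciInf_le ⟨0, fun r ⟨w, hw⟩ => hw ▸ norm_nonneg _⟩ (⟨proj v, hmem⟩ : X)
  exact (norm_eq_iInf_iff_real_inner_le_zero hXconv hmem).mp hinf w hw


/-- Batched dual-averaging regret bound with bounded gradients: with virtual iterates
`y_t = proj(x₁ − η·∑_{s=1}^{t−1} ∑_{j∈A_s} g_j^s)` and `‖g_i^t‖ ≤ L`, for every `z ∈ X`,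
`∑_{t=1}^T ∑_{i∈A_t} ⟪g_i^t, y_t − z⟫ ≤ ‖z − x₁‖²/(2η) + (η/2)·∑_{t=1}^T n_t²·L²`. -/
theorem batched_dual_averaging_regret
    {E : Type*} [NormedAddCommGroup E] [InnerProductSpace ℝ E] [CompleteSpace E]
    {I : Type*} [DecidableEq I]
    (X : Set E) (hXne : X.Nonempty) (hXcl : IsClosed X) (hXconv : Convex ℝ X)
    (proj : E → E)
    (hproj : ∀ v : E, proj v ∈ X ∧ ∀ w ∈ X, ‖v - proj v‖ ≤ ‖v - w‖)
    (T : ℕ) (A : ℕ → Finset I)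
    (g : ℕ → I → E) (L : ℝ)
    (hgL : ∀ t ∈ Finset.Icc 1 T, ∀ i ∈ A t, ‖g t i‖ ≤ L)
    (x₁ : E) (η : ℝ) (hη : 0 < η)
    (y : ℕ → E)
    (hy : ∀ t ∈ Finset.Icc 1 T,
      y t = proj (x₁ - η • ∑ s ∈ Finset.Icc 1 (t - 1), ∑ j ∈ A s, g s j))
    (z : E) (hz : z ∈ X) :
    ∑ t ∈ Finset.Icc 1 T, ∑ i ∈ A t, ⟪g t i, y t - z⟫
      ≤ ‖z - x₁‖ ^ 2 / (2 * η)
        + (η / 2) * ∑ t ∈ Finset.Icc 1 T, ((A t).card : ℝ) ^ 2 * L ^ 2 := by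
  set h : ℕ → E := fun t => ∑ j ∈ A t, g t j with hh
  set x : ℕ → E := fun t => x₁ - η • ∑ s ∈ Finset.Icc 1 (t-1), h s with hxdef
  set Y : ℕ → E := fun t => proj (x t) with hYdef
  set Φ : ℕ → ℝ := fun t => ‖x t - z‖^2 - ‖x t - Y t‖^2 with hΦdef
  have hx1 : x 1 = x₁ := by simp [hxdef]
  have hxsucc : ∀ t : ℕ, 1 ≤ t → x (t+1) = x t - η • h t := by
    intro t ht
    obtain ⟨m, rfl⟩ := Nat.exists_eq_add_of_le ht
    simp only [hxdef, Nat.add_sub_cancel_left, Nat.succ_sub_one]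
    rw [show 1 + m = m + 1 by ring, Finset.sum_Icc_succ_top (Nat.le_add_left 1 m),
      smul_add, sub_sub]
  have hstep : ∀ t ∈ Finset.Icc 1 T,
      2*η*⟪h t, Y t - z⟫ ≤ Φ t - Φ (t+1) + η^2*‖h t‖^2 := by
    intro t ht
    have ht1 : 1 ≤ t := (Finset.mem_Icc.mp ht).1
    have hVI : ⟪x t - Y t, Y (t+1) - Y t⟫ ≤ 0 :=
      proj_VI hXconv hproj (x t) (hproj (x (t+1))).1
    have := step_ineq η (x t) (h t) (Y t) (Y (t+1)) z hVI
    rw [← hxsucc t ht1] at this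
    simpa [hΦdef] using this
  have htel : ∀ n : ℕ, ∑ t ∈ Finset.Icc 1 n, (Φ t - Φ (t+1)) = Φ 1 - Φ (n+1) := by
    intro n
    induction n with
    | zero => simp
    | succ m ih =>
      rw [Finset.sum_Icc_succ_top (Nat.le_add_left 1 m), ih]
      ring
  have hhb : ∀ t ∈ Finset.Icc 1 T, ‖h t‖^2 ≤ ((A t).card : ℝ)^2 * L^2 := by
    intro t ht
    have h1 : ‖h t‖ ≤ ((A t).card : ℝ) * L := by
      refine (norm_sum_le _ _).trans ?_
      calc ∑ i ∈ A t, ‖g t i‖ ≤ ∑ _i ∈ A t, L := Finset.sum_le_sum (hgL t ht)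
        _ = ((A t).card : ℝ) * L := by rw [Finset.sum_const, nsmul_eq_mul]
    calc ‖h t‖^2 ≤ (((A t).card : ℝ) * L)^2 := by
          have := pow_le_pow_left₀ (norm_nonneg (h t)) h1 2
          simpa using this
      _ = ((A t).card : ℝ)^2 * L^2 := by ring
  -- main summed bound
  have hsum : 2*η*∑ t ∈ Finset.Icc 1 T, ⟪h t, Y t - z⟫
      ≤ ‖x₁ - z‖^2 + η^2 * ∑ t ∈ Finset.Icc 1 T, ((A t).card : ℝ)^2 * L^2 := by
    have hb1 : ∑ t ∈ Finset.Icc 1 T, (2*η*⟪h t, Y t - z⟫)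
        ≤ ∑ t ∈ Finset.Icc 1 T, (Φ t - Φ (t+1) + η^2*‖h t‖^2) :=
      Finset.sum_le_sum hstep
    rw [Finset.sum_add_distrib, htel T] at hb1
    rw [← Finset.mul_sum, ← Finset.mul_sum] at hb1
    have hΦ1 : Φ 1 ≤ ‖x₁ - z‖^2 := by
      simp only [hΦdef, hx1]
      nlinarith [sq_nonneg ‖x₁ - Y 1‖]
    have hΦT : 0 ≤ Φ (T+1) := by
      simp only [hΦdef]
      have := (hproj (x (T+1))).2 z hz
      have h0 : ‖x (T+1) - Y (T+1)‖^2 ≤ ‖x (T+1) - z‖^2 := by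
        have := pow_le_pow_left₀ (norm_nonneg _) this 2
        simpa using this
      linarith
    have hb2 : η^2 * ∑ t ∈ Finset.Icc 1 T, ‖h t‖^2
        ≤ η^2 * ∑ t ∈ Finset.Icc 1 T, ((A t).card : ℝ)^2 * L^2 := by
      apply mul_le_mul_of_nonneg_left (Finset.sum_le_sum hhb) (sq_nonneg η)
    calc 2*η*∑ t ∈ Finset.Icc 1 T, ⟪h t, Y t - z⟫
        ≤ Φ 1 - Φ (T+1) + η^2 * ∑ t ∈ Finset.Icc 1 T, ‖h t‖^2 := hb1
      _ ≤ ‖x₁ - z‖^2 + η^2 * ∑ t ∈ Finset.Icc 1 T, ((A t).card : ℝ)^2 * L^2 := by linarith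
  -- rewrite the goal LHS
  have hLHS : ∑ t ∈ Finset.Icc 1 T, ∑ i ∈ A t, ⟪g t i, y t - z⟫
      = ∑ t ∈ Finset.Icc 1 T, ⟪h t, Y t - z⟫ := by
    refine Finset.sum_congr rfl fun t ht => ?_
    rw [← sum_inner, hy t ht]
  rw [hLHS]
  have h2η : (0:ℝ) < 2*η := by linarith
  set S := ∑ t ∈ Finset.Icc 1 T, ⟪h t, Y t - z⟫
  set B := ∑ t ∈ Finset.Icc 1 T, ((A t).card : ℝ)^2 * L^2
  have : S ≤ (‖x₁ - z‖^2 + η^2 * B) / (2*η) := (le_div_iff₀ h2η).mpr (by linarith [hsum])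
  have heq : (‖x₁ - z‖^2 + η^2 * B) / (2*η) = ‖z - x₁‖^2/(2*η) + (η/2)*B := by
    rw [norm_sub_rev]
    field_simp
  linarith [heq ▸ this]
end
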